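/- A permutation w avoids the pattern 321 if and only if no reduced word of w contains a factor of the form i(i+1)i. -/

import Mathlib

/-- The simple transposition `s_i` in `S_n`, swapping positions `i` and `i+1`
(1-indexed, so valid for `1 ≤ i ≤ n-1`); otherwise the identity. -/
def simpleT (n : ℕ) (i : ℕ) : Equiv.Perm (Fin n) :=
  if h : 1 ≤ i ∧ i < n then Equiv.swap ⟨i - 1, by omega⟩ ⟨i, h.2⟩ else 1

/-- `l` is a word in the simple transpositions `s_1, …, s_{n-1}` with product `w`. -/
def IsWord (n : ℕ) (w : Equiv.Perm (Fin n)) (l : List ℕ) : Prop :=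
  (∀ i ∈ l, 1 ≤ i ∧ i < n) ∧ (l.map (simpleT n)).prod = w

/-- The Coxeter length of `w`. -/
noncomputable def coxLength (n : ℕ) (w : Equiv.Perm (Fin n)) : ℕ :=
  sInf {k | ∃ l, IsWord n w l ∧ l.length = k}

/-- A reduced word for `w`: a word of minimal length. -/
def IsReducedWord (n : ℕ) (w : Equiv.Perm (Fin n)) (l : List ℕ) : Prop :=
  IsWord n w l ∧ l.length = coxLength n w

/-- A run: a nonempty word of consecutive integers, increasing or decreasing. -/
def IsRun (r : List ℕ) : Prop :=
  r ≠ [] ∧ (List.Chain' (fun a b => b = a + 1) r ∨ List.Chain' (fun a b => a = b + 1) r)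

/-- `run(w)`: the minimum number of runs whose concatenation is a reduced word of `w`. -/
noncomputable def runStat (n : ℕ) (w : Equiv.Perm (Fin n)) : ℕ :=
  sInf {k | ∃ rs : List (List ℕ), rs.length = k ∧ (∀ r ∈ rs, IsRun r) ∧
    IsReducedWord n w rs.flatten}

/-- One-line notation of `w`, with entries `1, …, n`. -/
def oneLine {n : ℕ} (w : Equiv.Perm (Fin n)) : List ℕ :=
  List.ofFn (fun i => (w i : ℕ) + 1)

/-- Length of a longest increasing subsequence of the one-line notation of `w`. -/
noncomputable def lisLen {n : ℕ} (w : Equiv.Perm (Fin n)) : ℕ :=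
  sSup {k | ∃ l : List ℕ, l.Sublist (oneLine w) ∧ l.Pairwise (· < ·) ∧ l.length = k}

/-- Schensted row insertion: insert `x` into row `r`, possibly bumping an entry. -/
def rowInsert (r : List ℕ) (x : ℕ) : List ℕ × Option ℕ :=
  match r.findIdx? (fun y => decide (x < y)) with
  | none => (r ++ [x], none)
  | some i => (r.set i x, r[i]?)

/-- Schensted insertion of `x` into a tableau (list of rows). -/
def bumpInsert : List (List ℕ) → ℕ → List (List ℕ)
  | [], x => [[x]]
  | r :: rest, x =>
    match rowInsert r x with
    | (r', none) => r' :: rest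
    | (r', some y) => r' :: bumpInsert rest y

/-- The RSK insertion tableau of a word. -/
def Ptab (w : List ℕ) : List (List ℕ) := w.foldl bumpInsert []

/-- The index of the row where the new box appeared, going from `p` to `p'`. -/
def recRow (p p' : List (List ℕ)) : ℕ :=
  (List.range p'.length).findIdx
    (fun j => decide ((p.getD j []).length < (p'.getD j []).length))

/-- Add entry `v` at the end of row `j` of `q`. -/
def addAt (q : List (List ℕ)) (j v : ℕ) : List (List ℕ) :=
  if j < q.length then q.set j ((q.getD j []) ++ [v]) else q ++ [[v]]

/-- The RSK recording tableau of a word. -/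
def Qtab (w : List ℕ) : List (List ℕ) :=
  ((w.zipIdx.map Prod.swap).foldl (fun pq ix =>
    let p' := bumpInsert pq.1 ix.2
    (p', addAt pq.2 (recRow pq.1 p') (ix.1 + 1))) (([], []) : List (List ℕ) × List (List ℕ))).2

/-- The second row of a tableau. -/
def Row2 (t : List (List ℕ)) : List ℕ := t.getD 1 []

/-- A set `L` of integers is uncrowded if every interval `[y, y+2x]` contains
at most `x+1` elements of `L`. -/
def Uncrowded (L : Set ℤ) : Prop :=
  ∀ (y : ℤ) (x : ℕ), 0 < x → ({z : ℤ | y ≤ z ∧ z ≤ y + 2 * (x : ℤ)} ∩ L).ncard ≤ x + 1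

/-- `w` is boolean: some reduced word of `w` has all distinct letters. -/
def BooleanPerm (n : ℕ) (w : Equiv.Perm (Fin n)) : Prop :=
  ∃ l, IsReducedWord n w l ∧ l.Nodup

/-- `w` avoids the pattern `321`. -/
def Avoids321 {n : ℕ} (w : Equiv.Perm (Fin n)) : Prop :=
  ¬ ∃ i j k : Fin n, i < j ∧ j < k ∧ w k < w j ∧ w j < w i

/-- `w` avoids the pattern `3412`. -/
def Avoids3412 {n : ℕ} (w : Equiv.Perm (Fin n)) : Prop :=
  ¬ ∃ i j k l : Fin n, i < j ∧ j < k ∧ k < l ∧ w k < w l ∧ w l < w i ∧ w i < w j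

/-- The support of `w`: the letters appearing in reduced words of `w`. -/
def Supp (n : ℕ) (w : Equiv.Perm (Fin n)) : Set ℕ :=
  {i | ∃ l, IsReducedWord n w l ∧ i ∈ l}

/-- The entries of a row, as a set of integers. -/
def entrySet (r : List ℕ) : Set ℤ := {z | ∃ x ∈ r, (x : ℤ) = z}

/-- `(r1, r2)` are the rows of a standard Young tableau of size `n` with at most
two rows (entries `1, …, n`). -/
def IsSYT2 (n : ℕ) (r1 r2 : List ℕ) : Prop :=
  r1.Pairwise (· < ·) ∧ r2.Pairwise (· < ·) ∧ r2.length ≤ r1.length ∧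
  (∀ i < r2.length, r1.getD i 0 < r2.getD i 0) ∧
  (r1 ++ r2).Perm (List.range' 1 n)

/-- The tableau (list of nonempty rows) with rows `r1`, `r2`. -/
def tab2 (r1 r2 : List ℕ) : List (List ℕ) :=
  if r2 = [] then (if r1 = [] then [] else [r1]) else [r1, r2]

/-- Every maximal block of `1`s (`true`s) in the binary word has odd length. -/
def OddBlocks (l : List Bool) : Prop :=
  ∀ l₁ l₂ l₃ : List Bool, l = l₁ ++ l₂ ++ l₃ → l₂ ≠ [] → (∀ b ∈ l₂, b = true) →
    l₁.getLast? ≠ some true → l₃.head? ≠ some true → Odd l₂.length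

/-!
Positions are 0-based, so `s_b` swaps positions `b-1` and `b`. The Coxeter length of `w` equals
its number of inversions, and appending the letter `b` to a word of `w` raises the length exactly
when `w(b-1) < w(b)`. If `l₁ ++ [i, i+1, i] ++ l₂` is a reduced
word of `w`, with `u` and `v` the products of `l₁` and `l₂`, then `u` is increasing on the positions
`i-1, i, i+1`, and so is `v⁻¹` (apply the same argument to the reversed word, a reduced word of
`w⁻¹`). Since `w = u s_i s_{i+1} s_i v`, the positions `v⁻¹(i-1) < v⁻¹(i) < v⁻¹(i+1)` carry a 321.

Conversely, take a 321 at positions `p < q < r`. If they are consecutive, a reduced word of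
`w s_q s_{q+1} s_q` followed by `q, q+1, q` is reduced for `w`. Otherwise one of the gaps
`[p, q]`, `[q, r]` has length at least two and contains a descent `d` of `w`; then `w s_d` is one
shorter and still contains a 321 (the pattern moved by `s_d`), so by induction on the length it has
a reduced word containing the braid, and appending `d` gives one for `w`.
-/

open Equiv

section

variable {n : ℕ}

def inversions (w : Perm (Fin n)) : Finset (Fin n × Fin n) :=
  Finset.univ.filter fun p => p.1 < p.2 ∧ w p.2 < w p.1

def numInversions (w : Perm (Fin n)) : ℕ := (inversions w).card

@[simp]
lemma mem_inversions {w : Perm (Fin n)} {p : Fin n × Fin n} :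
    p ∈ inversions w ↔ p.1 < p.2 ∧ w p.2 < w p.1 := by
  simp [inversions]

@[simp]
lemma numInversions_one : numInversions (1 : Perm (Fin n)) = 0 := by
  rw [numInversions, Finset.card_eq_zero, Finset.eq_empty_iff_forall_notMem]
  intro p hp
  rw [mem_inversions] at hp
  exact lt_asymm hp.1 hp.2

lemma numInversions_inv (w : Perm (Fin n)) : numInversions w⁻¹ = numInversions w :=
  Finset.card_bij' (fun p _ => (w⁻¹ p.2, w⁻¹ p.1)) (fun p _ => (w p.2, w p.1))
    (by simp +contextual) (by simp +contextual) (by simp) (by simp)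

lemma eq_one_of_numInversions_eq_zero {w : Perm (Fin n)} (h : numInversions w = 0) :
    w = 1 := by
  have hmono : StrictMono w := by
    intro x y hxy
    by_contra! hle
    have hinv : (x, y) ∈ inversions w :=
      mem_inversions.2 ⟨hxy, hle.lt_of_ne (w.injective.ne hxy.ne')⟩
    simp_all [numInversions]
  ext x
  exact congrArg Fin.val (le_antisymm hmono.apply_le hmono.le_apply)

lemma swap_apply_of_val_ne {a b x : Fin n} (ha : x.val ≠ a.val) (hb : x.val ≠ b.val) :
    swap a b x = x :=
  swap_apply_of_ne_of_ne (Fin.ne_of_val_ne ha) (Fin.ne_of_val_ne hb)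

lemma swap_lt_swap_iff {a b x y : Fin n} (hab : a.val + 1 = b.val)
    (hxy : ¬(x = a ∧ y = b)) (hyx : ¬(x = b ∧ y = a)) :
    swap a b x < swap a b y ↔ x < y := by
  simp only [swap_apply_def, Fin.lt_def, Fin.ext_iff] at *
  split_ifs <;> omega

lemma numInversions_mul_swap_of_lt {w : Perm (Fin n)} {a b : Fin n} (hab : a.val + 1 = b.val)
    (h : w a < w b) : numInversions (w * swap a b) = numInversions w + 1 := by
  have hab' : a < b := Fin.lt_def.2 (by omega)
  have hmem : (a, b) ∈ inversions (w * swap a b) := by simpa using ⟨hab', h⟩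
  have herase : (inversions (w * swap a b)).erase (a, b) =
      (inversions w).map (prodCongr (swap a b) (swap a b)).toEmbedding := by
    ext ⟨x, y⟩
    by_cases hxy : x = a ∧ y = b
    · obtain ⟨rfl, rfl⟩ := hxy
      simp [hab'.not_gt]
    by_cases hyx : x = b ∧ y = a
    · obtain ⟨rfl, rfl⟩ := hyx
      simp [hab'.not_gt, h.not_gt]
    simp [Finset.mem_map_equiv, swap_lt_swap_iff hab hxy hyx, hxy]
  rw [numInversions, ← Finset.card_erase_add_one hmem, herase, Finset.card_map, numInversions]

lemma numInversions_mul_swap_of_gt {w : Perm (Fin n)} {a b : Fin n} (hab : a.val + 1 = b.val)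
    (h : w b < w a) : numInversions (w * swap a b) + 1 = numInversions w := by
  have := numInversions_mul_swap_of_lt (w := w * swap a b) hab (by simpa using h)
  rwa [mul_assoc, swap_mul_self, mul_one, eq_comm] at this

lemma simpleT_eq_swap {a b : Fin n} (hab : a.val + 1 = b.val) : simpleT n b = swap a b := by
  rw [simpleT, dif_pos (by omega)]
  congr
  omega

@[simp]
lemma simpleT_mul_self (i : ℕ) : simpleT n i * simpleT n i = 1 := by
  unfold simpleT
  split_ifs <;> simp

lemma simpleT_inv (i : ℕ) : (simpleT n i)⁻¹ = simpleT n i :=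
  inv_eq_of_mul_eq_one_right (simpleT_mul_self i)

lemma numInversions_mul_simpleT_le (w : Perm (Fin n)) (i : ℕ) :
    numInversions (w * simpleT n i) ≤ numInversions w + 1 := by
  unfold simpleT
  split_ifs with hi
  · set a : Fin n := ⟨i - 1, by omega⟩
    set b : Fin n := ⟨i, hi.2⟩
    have hab : a.val + 1 = b.val := by simp only [a, b]; omega
    rcases lt_or_gt_of_ne (w.injective.ne (Fin.ne_of_val_ne (by omega) : a ≠ b)) with h | h
    · exact (numInversions_mul_swap_of_lt hab h).le
    · have := numInversions_mul_swap_of_gt hab h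
      omega
  · simp

lemma numInversions_mul_simpleT_of_gt {w : Perm (Fin n)} {a b : Fin n}
    (hab : a.val + 1 = b.val) (h : w b < w a) :
    numInversions (w * simpleT n b) + 1 = numInversions w := by
  rw [simpleT_eq_swap hab]
  exact numInversions_mul_swap_of_gt hab h

def wordProd (n : ℕ) (l : List ℕ) : Perm (Fin n) := (l.map (simpleT n)).prod

@[simp]
lemma wordProd_nil : wordProd n [] = 1 := rfl

@[simp]
lemma wordProd_cons (i : ℕ) (l : List ℕ) : wordProd n (i :: l) = simpleT n i * wordProd n l :=
  List.prod_cons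

@[simp]
lemma wordProd_append (l₁ l₂ : List ℕ) :
    wordProd n (l₁ ++ l₂) = wordProd n l₁ * wordProd n l₂ := by
  simp [wordProd]

lemma wordProd_reverse (l : List ℕ) : wordProd n l.reverse = (wordProd n l)⁻¹ := by
  simp [wordProd, List.prod_inv_reverse, Function.comp_def, simpleT_inv]

lemma numInversions_mul_wordProd_le (g : Perm (Fin n)) (l : List ℕ) :
    numInversions (g * wordProd n l) ≤ numInversions g + l.length := by
  induction l generalizing g with
  | nil => simp
  | cons i l ih =>
    have := ih (g * simpleT n i)
    have := numInversions_mul_simpleT_le g i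
    rw [wordProd_cons, ← mul_assoc, List.length_cons]
    omega

lemma numInversions_wordProd_le (l : List ℕ) : numInversions (wordProd n l) ≤ l.length := by
  simpa using numInversions_mul_wordProd_le 1 l

lemma exists_descent_between {w : Perm (Fin n)} {x y : Fin n} (hxy : x < y) (h : w y < w x) :
    ∃ a b : Fin n, a.val + 1 = b.val ∧ x ≤ a ∧ b ≤ y ∧ w b < w a := by
  by_contra! hasc
  have hmono : ∀ m (hm : x.val + m < n), x.val + m ≤ y.val →
      w x ≤ w ⟨x.val + m, hm⟩ := by
    intro m
    induction m with
    | zero => simp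
    | succ m ih =>
      intro hm hmy
      exact (ih (by omega) (by omega)).trans
        (hasc _ _ rfl (Fin.le_def.2 (by simp)) (Fin.le_def.2 (by simp; omega)))
  have := hmono (y.val - x.val) (by omega) (by omega)
  simp only [show x.val + (y.val - x.val) = y.val by omega, Fin.eta] at this
  exact this.not_gt h

lemma IsWord.append_singleton {w : Perm (Fin n)} {l : List ℕ} {i : ℕ}
    (hl : IsWord n (w * simpleT n i) l) (hi : 1 ≤ i ∧ i < n) : IsWord n w (l ++ [i]) := by
  refine ⟨fun j hj => ?_, ?_⟩
  · rcases List.mem_append.1 hj with hj | hj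
    · exact hl.1 j hj
    · rwa [List.mem_singleton.1 hj]
  · change wordProd n (l ++ [i]) = w
    rw [wordProd_append, show wordProd n l = _ from hl.2]
    simp [mul_assoc]

lemma exists_isWord_length_eq_numInversions (w : Perm (Fin n)) :
    ∃ l, IsWord n w l ∧ l.length = numInversions w := by
  induction h : numInversions w generalizing w with
  | zero => exact ⟨[], ⟨by simp, (eq_one_of_numInversions_eq_zero h).symm⟩, rfl⟩
  | succ m ih =>
    obtain ⟨⟨x, y⟩, hxy⟩ : (inversions w).Nonempty :=
      Finset.card_pos.1 (by rw [← numInversions, h]; omega)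
    rw [mem_inversions] at hxy
    obtain ⟨a, b, hab, -, -, hba⟩ := exists_descent_between hxy.1 hxy.2
    have hdrop := numInversions_mul_simpleT_of_gt hab hba
    obtain ⟨l, hl, hlen⟩ := ih (w * simpleT n b) (by omega)
    exact ⟨l ++ [b.val], hl.append_singleton (by omega), by simp [hlen]⟩

lemma coxLength_eq_numInversions (w : Perm (Fin n)) : coxLength n w = numInversions w := by
  obtain ⟨l, hl, hlen⟩ := exists_isWord_length_eq_numInversions w
  refine le_antisymm (Nat.sInf_le ⟨l, hl, hlen⟩) (le_csInf ⟨_, l, hl, hlen⟩ ?_)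
  rintro k ⟨l', ⟨-, rfl⟩, rfl⟩
  exact numInversions_wordProd_le l'

lemma isReducedWord_iff {w : Perm (Fin n)} {l : List ℕ} :
    IsReducedWord n w l ↔ IsWord n w l ∧ l.length = numInversions w := by
  rw [IsReducedWord, coxLength_eq_numInversions]

lemma IsReducedWord.append_of_descent {w : Perm (Fin n)} {l : List ℕ} {a b : Fin n}
    (hab : a.val + 1 = b.val) (hba : w b < w a) (hl : IsReducedWord n (w * simpleT n b) l) :
    IsReducedWord n w (l ++ [b.val]) := by
  rw [isReducedWord_iff] at hl ⊢
  have hdrop := numInversions_mul_simpleT_of_gt hab hba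
  exact ⟨hl.1.append_singleton (by omega), by simp [hl.2, hdrop]⟩

def IsReducedList (n : ℕ) (l : List ℕ) : Prop := numInversions (wordProd n l) = l.length

lemma IsReducedWord.isReducedList {w : Perm (Fin n)} {l : List ℕ} (h : IsReducedWord n w l) :
    IsReducedList n l := by
  obtain ⟨⟨-, hprod⟩, hlen⟩ := isReducedWord_iff.1 h
  rw [IsReducedList, show wordProd n l = w from hprod, hlen]

lemma IsReducedList.reverse {l : List ℕ} (h : IsReducedList n l) : IsReducedList n l.reverse := by
  rwa [IsReducedList, wordProd_reverse, numInversions_inv, List.length_reverse]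

lemma IsReducedList.of_append_left {l₁ l₂ : List ℕ} (h : IsReducedList n (l₁ ++ l₂)) :
    IsReducedList n l₁ := by
  have hsub := numInversions_mul_wordProd_le (wordProd n l₁) l₂
  have hle := numInversions_wordProd_le (n := n) l₁
  rw [← wordProd_append, h, List.length_append] at hsub
  exact le_antisymm hle (by omega)

lemma IsReducedList.lt_of_append_cons {l l' : List ℕ} {a b : Fin n} (hab : a.val + 1 = b.val)
    (h : IsReducedList n (l ++ b.val :: l')) : wordProd n l a < wordProd n l b := by
  rw [← List.singleton_append, ← List.append_assoc] at h
  have hpre := h.of_append_left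
  rw [IsReducedList, wordProd_append, wordProd_cons, wordProd_nil, mul_one, List.length_append,
    List.length_singleton] at hpre
  refine (lt_or_gt_of_ne ((wordProd n l).injective.ne (Fin.ne_of_val_ne (by omega)))).resolve_right
    fun hgt => ?_
  have := numInversions_mul_simpleT_of_gt hab hgt
  have := numInversions_wordProd_le (n := n) l
  omega

lemma IsReducedList.lt_lt_of_braid {a b c : Fin n} (hab : a.val + 1 = b.val)
    (hbc : b.val + 1 = c.val) {l₁ l₂ : List ℕ} (h : IsReducedList n (l₁ ++ [b.val, c.val, b.val] ++ l₂)) :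
    wordProd n l₁ a < wordProd n l₁ b ∧ wordProd n l₁ b < wordProd n l₁ c := by
  constructor
  · exact IsReducedList.lt_of_append_cons (l' := [c.val, b.val] ++ l₂) hab (by simpa using h)
  · have := IsReducedList.lt_of_append_cons (l := l₁ ++ [b.val, c.val]) (l' := l₂) hab
      (by simpa using h)
    have hca : swap b c a = a := swap_apply_of_val_ne (by omega) (by omega)
    have hac : swap a b c = c := swap_apply_of_val_ne (by omega) (by omega)
    simpa [simpleT_eq_swap hab, simpleT_eq_swap hbc, hca, hac] using this

lemma not_avoids321_of_isReducedWord_braid {w : Perm (Fin n)} {l₁ l₂ : List ℕ} {i : ℕ}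
    (h : IsReducedWord n w (l₁ ++ [i, i + 1, i] ++ l₂)) : ¬Avoids321 w := by
  obtain ⟨hvalid, hprod⟩ := h.1
  have hi := hvalid i (by simp)
  have hi' := hvalid (i + 1) (by simp)
  set a : Fin n := ⟨i - 1, by omega⟩
  set b : Fin n := ⟨i, hi.2⟩
  set c : Fin n := ⟨i + 1, hi'.2⟩
  have hab : a.val + 1 = b.val := by simp only [a, b]; omega
  have hbc : b.val + 1 = c.val := rfl
  have hred : IsReducedList n (l₁ ++ [b.val, c.val, b.val] ++ l₂) := h.isReducedList
  have hred_rev : IsReducedList n (l₂.reverse ++ [b.val, c.val, b.val] ++ l₁.reverse) := by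
    simpa using hred.reverse
  obtain ⟨hu₁, hu₂⟩ := hred.lt_lt_of_braid hab hbc
  obtain ⟨hv₁, hv₂⟩ := hred_rev.lt_lt_of_braid hab hbc
  rw [wordProd_reverse] at hv₁ hv₂
  have hca : swap b c a = a := swap_apply_of_val_ne (by omega) (by omega)
  have hac : swap a b c = c := swap_apply_of_val_ne (by omega) (by omega)
  have hw : ∀ x, w ((wordProd n l₂)⁻¹ x) =
      wordProd n l₁ (swap a b (swap b c (swap a b x))) := by
    have hsb : simpleT n i = swap a b := simpleT_eq_swap hab
    have hsc : simpleT n (i + 1) = swap b c := simpleT_eq_swap hbc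
    simp [← show wordProd n _ = w from hprod, hsb, hsc]
  refine fun hav => hav ⟨_, _, _, hv₁, hv₂, ?_, ?_⟩
  · rw [hw, hw]
    simpa [hca, hac] using hu₁
  · rw [hw, hw]
    simpa [hca, hac] using hu₂

lemma exists_isReducedWord (w : Perm (Fin n)) : ∃ l, IsReducedWord n w l := by
  obtain ⟨l, hl, hlen⟩ := exists_isWord_length_eq_numInversions w
  exact ⟨l, isReducedWord_iff.2 ⟨hl, hlen⟩⟩

lemma not_avoids321_mul_simpleT {w : Perm (Fin n)} {a b i j k : Fin n} (hab : a.val + 1 = b.val)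
    (hij : i < j) (hjk : j < k) (hkj : w k < w j) (hji : w j < w i)
    (hij_ab : ¬(i = a ∧ j = b)) (hjk_ab : ¬(j = a ∧ k = b)) :
    ¬Avoids321 (w * simpleT n b) := by
  rw [simpleT_eq_swap hab]
  have hab' : a < b := Fin.lt_def.2 (by omega)
  have hlt : ∀ {x y}, x < y → ¬(x = a ∧ y = b) → swap a b x < swap a b y := fun hxy h =>
    (swap_lt_swap_iff hab h (by rintro ⟨rfl, rfl⟩; exact hab'.not_gt hxy)).2 hxy
  exact fun hav => hav ⟨swap a b i, swap a b j, swap a b k, hlt hij hij_ab, hlt hjk hjk_ab,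
    by simpa, by simpa⟩

lemma consecutive_or_exists_descent_of_not_avoids321 {w : Perm (Fin n)} (h : ¬Avoids321 w) :
    (∃ a b c : Fin n, a.val + 1 = b.val ∧ b.val + 1 = c.val ∧ w c < w b ∧ w b < w a) ∨
    ∃ a b : Fin n, a.val + 1 = b.val ∧ w b < w a ∧ ¬Avoids321 (w * simpleT n b) := by
  obtain ⟨i, j, k, hij, hjk, hkj, hji⟩ := not_not.1 h
  by_cases hij_gap : i.val + 1 < j.val
  · obtain ⟨a, b, hab, hia, hbj, hba⟩ := exists_descent_between hij hji
    refine .inr ⟨a, b, hab, hba, not_avoids321_mul_simpleT hab hij hjk hkj hji ?_ ?_⟩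
    · rintro ⟨rfl, rfl⟩
      omega
    · rintro ⟨rfl, -⟩
      exact hbj.not_gt (Fin.lt_def.2 (by omega))
  by_cases hjk_gap : j.val + 1 < k.val
  · obtain ⟨a, b, hab, hja, hbk, hba⟩ := exists_descent_between hjk hkj
    refine .inr ⟨a, b, hab, hba, not_avoids321_mul_simpleT hab hij hjk hkj hji ?_ ?_⟩
    · rintro ⟨rfl, -⟩
      exact hja.not_gt hij
    · rintro ⟨rfl, rfl⟩
      omega
  exact .inl ⟨i, j, k, by omega, by omega, hkj, hji⟩

lemma exists_isReducedWord_braid_of_consecutive {w : Perm (Fin n)} {a b c : Fin n}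
    (hab : a.val + 1 = b.val) (hbc : b.val + 1 = c.val) (hcb : w c < w b) (hba : w b < w a) :
    ∃ l, IsReducedWord n w (l ++ [b.val, c.val, b.val]) := by
  obtain ⟨l, hl⟩ := exists_isReducedWord (w * simpleT n b * simpleT n c * simpleT n b)
  have hca : swap b c a = a := swap_apply_of_val_ne (by omega) (by omega)
  have hac : swap a b c = c := swap_apply_of_val_ne (by omega) (by omega)
  have h₁ := hl.append_of_descent hab
    (by simpa [simpleT_eq_swap hab, simpleT_eq_swap hbc, hca, hac])
  have h₂ := h₁.append_of_descent hbc (by simpa [simpleT_eq_swap hab, hac] using hcb.trans hba)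
  exact ⟨l, by simpa using h₂.append_of_descent hab hba⟩

lemma exists_isReducedWord_braid_of_not_avoids321 {w : Perm (Fin n)} (h : ¬Avoids321 w) :
    ∃ l₁ l₂ i, IsReducedWord n w (l₁ ++ [i, i + 1, i] ++ l₂) := by
  induction hN : numInversions w using Nat.strong_induction_on generalizing w with
  | _ N ih =>
  rcases consecutive_or_exists_descent_of_not_avoids321 h with
    ⟨a, b, c, hab, hbc, hcb, hba⟩ | ⟨a, b, hab, hba, hpattern⟩
  · obtain ⟨l, hl⟩ := exists_isReducedWord_braid_of_consecutive hab hbc hcb hba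
    exact ⟨l, [], b.val, by simpa [← hbc] using hl⟩
  · have hdrop := numInversions_mul_simpleT_of_gt hab hba
    obtain ⟨l₁, l₂, i, hl⟩ := ih _ (by omega) hpattern rfl
    exact ⟨l₁, l₂ ++ [b.val], i, by simpa using hl.append_of_descent hab hba⟩

end

theorem stmt7 (n : ℕ) (w : Equiv.Perm (Fin n)) :
    Avoids321 w ↔ ∀ l, IsReducedWord n w l →
      ¬ ∃ (l₁ l₂ : List ℕ) (i : ℕ), l = l₁ ++ [i, i + 1, i] ++ l₂ := by
  constructor
  · rintro hav l hl ⟨l₁, l₂, i, rfl⟩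
    exact not_avoids321_of_isReducedWord_braid hl hav
  · intro h
    by_contra hpattern
    obtain ⟨l₁, l₂, i, hl⟩ := exists_isReducedWord_braid_of_not_avoids321 hpattern
    exact h _ hl ⟨l₁, l₂, i, rfl⟩
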